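/- arXiv:1004.3956 — 2 statements merged into one kernel-verified Lean document; each statement's English description precedes it below -/
import Mathlib

section
/- Let f : [0,1) → ℝ be C², positive, nondecreasing and convex with f(t) → ∞ as t → 1⁻, and define g : [0,∞) → ℝ by g(v) = e^v · f(1 − e^{−v}). Then g is positive, nondecreasing, convex, and superlinear: g(t)/t → ∞ as t → ∞. -/
open Set Filter Topology Real

/-! The substitution `s = 1 - e^{-v}` maps `[0,∞)` increasingly into `[0,1)` and has
`s' = e^{-v}`, so `g' = g + f' ∘ s`. Both summands are nondecreasing (`g` as a product of
nonnegative nondecreasing factors, `f'` by convexity of `f`), hence `g` is convex.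
Superlinearity already follows from `g v ≥ f 0 · e^v`. -/

lemma one_sub_exp_neg_mem_Ico {v : ℝ} (hv : 0 ≤ v) : 1 - exp (-v) ∈ Ico 0 1 :=
  ⟨by linarith [exp_le_one_iff.mpr (neg_nonpos.mpr hv)], by linarith [exp_pos (-v)]⟩

lemma one_sub_exp_neg_mem_Ioo {v : ℝ} (hv : 0 < v) : 1 - exp (-v) ∈ Ioo 0 1 :=
  ⟨by linarith [exp_lt_one_iff.mpr (neg_neg_of_pos hv)], by linarith [exp_pos (-v)]⟩

lemma monotone_one_sub_exp_neg : Monotone fun v : ℝ => 1 - exp (-v) :=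
  fun _ _ h => sub_le_sub_left (exp_le_exp.mpr (neg_le_neg h)) 1

lemma hasDerivAt_exp_mul_comp_one_sub_exp_neg {f : ℝ → ℝ} {f' v : ℝ}
    (hf : HasDerivAt f f' (1 - exp (-v))) :
    HasDerivAt (fun v => exp v * f (1 - exp (-v))) (exp v * f (1 - exp (-v)) + f') v := by
  have hs : HasDerivAt (fun v : ℝ => 1 - exp (-v)) (exp (-v)) v := by
    simpa using ((hasDerivAt_neg v).exp).const_sub 1
  refine ((hasDerivAt_exp v).mul (hf.comp v hs)).congr_deriv ?_
  simp only [Function.comp_def]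
  rw [mul_left_comm, ← exp_add, add_neg_cancel, exp_zero, mul_one]

lemma tendsto_div_self_atTop_of_const_mul_exp_le {g : ℝ → ℝ} {c : ℝ} (hc : 0 < c)
    (hg : ∀ᶠ t in atTop, c * exp t ≤ g t) : Tendsto (fun t => g t / t) atTop atTop := by
  have hexp : Tendsto (fun t => c * (exp t / t)) atTop atTop := by
    simpa using (tendsto_exp_div_pow_atTop 1).const_mul_atTop hc
  refine tendsto_atTop_mono' atTop ?_ hexp
  filter_upwards [hg, eventually_gt_atTop 0] with t hgt ht
  rw [← mul_div_assoc]
  gcongr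

section

variable {f : ℝ → ℝ}

lemma exp_mul_comp_one_sub_exp_neg_pos (hpos : ∀ t ∈ Ico (0 : ℝ) 1, 0 < f t) {v : ℝ}
    (hv : 0 ≤ v) : 0 < exp v * f (1 - exp (-v)) :=
  mul_pos (exp_pos v) (hpos _ (one_sub_exp_neg_mem_Ico hv))

lemma monotoneOn_exp_mul_comp_one_sub_exp_neg (hnonneg : ∀ t ∈ Ico (0 : ℝ) 1, 0 ≤ f t)
    (hmono : MonotoneOn f (Ico 0 1)) :
    MonotoneOn (fun v => exp v * f (1 - exp (-v))) (Ici 0) :=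
  exp_monotone.monotoneOn _ |>.mul
    (hmono.comp (monotone_one_sub_exp_neg.monotoneOn _) fun _ => one_sub_exp_neg_mem_Ico)
    (fun v _ => (exp_pos v).le) fun _ hv => hnonneg _ (one_sub_exp_neg_mem_Ico hv)

lemma tendsto_exp_mul_comp_one_sub_exp_neg_div_self (h0 : 0 < f 0)
    (hmono : MonotoneOn f (Ico 0 1)) :
    Tendsto (fun t => exp t * f (1 - exp (-t)) / t) atTop atTop := by
  refine tendsto_div_self_atTop_of_const_mul_exp_le h0 ?_
  filter_upwards [eventually_ge_atTop 0] with t ht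
  have hs := one_sub_exp_neg_mem_Ico ht
  rw [mul_comm]
  exact mul_le_mul_of_nonneg_left (hmono (left_mem_Ico.mpr one_pos) hs hs.1) (exp_pos t).le

lemma convexOn_exp_mul_comp_one_sub_exp_neg (hnonneg : ∀ t ∈ Ico (0 : ℝ) 1, 0 ≤ f t)
    (hmono : MonotoneOn f (Ico 0 1)) (hcont : ContinuousOn f (Ico 0 1))
    (hdiff : DifferentiableOn ℝ f (Ioo 0 1)) (hconv : ConvexOn ℝ (Ico 0 1) f) :
    ConvexOn ℝ (Ici 0) fun v => exp v * f (1 - exp (-v)) := by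
  have hderiv : ∀ v ∈ Ioi (0 : ℝ), HasDerivAt (fun v => exp v * f (1 - exp (-v)))
      (exp v * f (1 - exp (-v)) + deriv f (1 - exp (-v))) v := fun v hv =>
    hasDerivAt_exp_mul_comp_one_sub_exp_neg
      (hdiff.differentiableAt (isOpen_Ioo.mem_nhds (one_sub_exp_neg_mem_Ioo hv))).hasDerivAt
  have hderiv_mono : MonotoneOn (deriv f) (Ioo 0 1) :=
    (hconv.subset Ioo_subset_Ico_self (convex_Ioo 0 1)).monotoneOn_deriv
      fun _ hx => hdiff.differentiableAt (isOpen_Ioo.mem_nhds hx)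
  refine MonotoneOn.convexOn_of_deriv (convex_Ici 0) ?_ ?_ ?_
  · exact continuous_exp.continuousOn.mul <| hcont.comp (by fun_prop) fun _ =>
      one_sub_exp_neg_mem_Ico
  · rw [interior_Ici]
    exact fun v hv => (hderiv v hv).differentiableAt.differentiableWithinAt
  · rw [interior_Ici]
    intro a ha b hb hab
    rw [(hderiv a ha).deriv, (hderiv b hb).deriv]
    exact add_le_add
      (monotoneOn_exp_mul_comp_one_sub_exp_neg hnonneg hmono (mem_Ici_of_Ioi ha)
        (mem_Ici_of_Ioi hb) hab)
      (hderiv_mono (one_sub_exp_neg_mem_Ioo ha) (one_sub_exp_neg_mem_Ioo hb)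
        (monotone_one_sub_exp_neg hab))

end

theorem stmt1_general (f g : ℝ → ℝ)
    (hf : ContDiffOn ℝ 2 f (Ico 0 1))
    (hpos : ∀ t ∈ Ico (0:ℝ) 1, 0 < f t)
    (hmono : MonotoneOn f (Ico 0 1))
    (hconv : ConvexOn ℝ (Ico 0 1) f)
    (hg : ∀ v, g v = Real.exp v * f (1 - Real.exp (-v))) :
    (∀ v ∈ Ici (0:ℝ), 0 < g v) ∧ MonotoneOn g (Ici 0) ∧ ConvexOn ℝ (Ici 0) g ∧
      Tendsto (fun t => g t / t) atTop atTop := by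
  obtain rfl : g = fun v => exp v * f (1 - exp (-v)) := funext hg
  have hnonneg : ∀ t ∈ Ico (0 : ℝ) 1, 0 ≤ f t := fun t ht => (hpos t ht).le
  have hdiff : DifferentiableOn ℝ f (Ioo 0 1) :=
    (hf.differentiableOn two_ne_zero).mono Ioo_subset_Ico_self
  exact ⟨fun _ => exp_mul_comp_one_sub_exp_neg_pos hpos,
    monotoneOn_exp_mul_comp_one_sub_exp_neg hnonneg hmono,
    convexOn_exp_mul_comp_one_sub_exp_neg hnonneg hmono hf.continuousOn hdiff hconv,
    tendsto_exp_mul_comp_one_sub_exp_neg_div_self (hpos 0 (left_mem_Ico.mpr one_pos)) hmono⟩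

/-- With `f` C², positive, nondecreasing, convex on `[0,1)` and blowing up at `1⁻`,
the function `g(v) = e^v f(1 - e^{-v})` is positive, nondecreasing, convex and
superlinear on `[0,∞)`. -/
theorem stmt1 (f g : ℝ → ℝ)
    (hf : ContDiffOn ℝ 2 f (Ico 0 1))
    (hpos : ∀ t ∈ Ico (0:ℝ) 1, 0 < f t)
    (hmono : MonotoneOn f (Ico 0 1))
    (hconv : ConvexOn ℝ (Ico 0 1) f)
    (hblow : Tendsto f (𝓝[<] (1:ℝ)) atTop)
    (hg : ∀ v, g v = Real.exp v * f (1 - Real.exp (-v))) :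
    (∀ v ∈ Ici (0:ℝ), 0 < g v) ∧ MonotoneOn g (Ici 0) ∧ ConvexOn ℝ (Ici 0) g ∧
      Tendsto (fun t => g t / t) atTop atTop :=
  stmt1_general f g hf hpos hmono hconv hg
end

section
/- Let h : [0,∞) → ℝ be C¹, t₀ > 0, and suppose t ↦ t² h'(t) is nondecreasing on [t₀,∞). Let α > 0 and define K(t) = α² ∫₀ᵗ s² h'(s)² e^{2α h(s)} ds. Then there exists a constant C such that K(t) ≤ (α/2)·t² h'(t) e^{2α h(t)} + C for all t ≥ t₀. -/
/-!
On `[t₀, t]` write the integrand as `(s² h'(s)) · h'(s) e^{2αh(s)}`. The first factor is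
nondecreasing, hence at most `t² h'(t)`, and the second is the nonnegative derivative of
`e^{2αh} / (2α)`. So `α² ∫_{t₀}^t … ≤ (α/2) t² h'(t) (e^{2αh(t)} - e^{2αh(t₀)})`, which is at most
`(α/2) t² h'(t) e^{2αh(t)}`; the constant is `C = K(t₀)`.
-/

open Set Real intervalIntegral MeasureTheory

theorem integral_mul_deriv_le_of_monotoneOn {u v v' : ℝ → ℝ} {a b : ℝ} (hab : a ≤ b)
    (hu : MonotoneOn u (Icc a b)) (hv : ∀ x ∈ Icc a b, HasDerivAt v (v' x) x)
    (hv' : ContinuousOn v' (Icc a b)) (hv'_nonneg : ∀ x ∈ Icc a b, 0 ≤ v' x) :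
    ∫ x in a..b, u x * v' x ≤ u b * (v b - v a) := by
  rw [← uIcc_of_le hab] at hv hv'
  have hv'_int : IntervalIntegrable v' volume a b := hv'.intervalIntegrable
  have huv'_int : IntervalIntegrable (fun x => u x * v' x) volume a b :=
    (uIcc_of_le hab ▸ hu).intervalIntegrable.mul_continuousOn hv'
  calc ∫ x in a..b, u x * v' x ≤ ∫ x in a..b, u b * v' x :=
        integral_mono_on hab huv'_int (hv'_int.const_mul _) fun x hx =>
          mul_le_mul_of_nonneg_right (hu hx ⟨hab, le_rfl⟩ hx.2) (hv'_nonneg x hx)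
    _ = u b * (v b - v a) := by
        rw [intervalIntegral.integral_const_mul, integral_eq_sub_of_hasDerivAt hv hv'_int]

section ContDiffOnIci

variable {h : ℝ → ℝ} {a : ℝ}

theorem ContDiffOn.hasDerivAt_of_Ici (hh : ContDiffOn ℝ 1 h (Ici a)) {x : ℝ} (hx : a < x) :
    HasDerivAt h (deriv h x) x :=
  ((hh.differentiableOn one_ne_zero x hx.le).differentiableAt (Ici_mem_nhds hx)).hasDerivAt

theorem ContDiffOn.continuousOn_deriv_of_Ici (hh : ContDiffOn ℝ 1 h (Ici a)) :
    ContinuousOn (deriv h) (Ioi a) :=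
  (hh.mono Ioi_subset_Ici_self).continuousOn_deriv_of_isOpen isOpen_Ioi le_rfl

/-- `deriv h a` is junk when `h` is only differentiable from the right at `a`; on `(a, b)` it
agrees with the continuous one-sided derivative. -/
theorem ContDiffOn.intervalIntegrable_mul_deriv_pow (hh : ContDiffOn ℝ 1 h (Ici a)) {f : ℝ → ℝ}
    {b : ℝ} (hab : a ≤ b) (hf : ContinuousOn f (Icc a b)) (n : ℕ) :
    IntervalIntegrable (fun s => f s * deriv h s ^ n) volume a b := by
  have hcont : ContinuousOn (fun s => f s * derivWithin h (Ici a) s ^ n) (Icc a b) := hf.mul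
    (((hh.continuousOn_derivWithin (uniqueDiffOn_Ici a) le_rfl).mono Icc_subset_Ici_self).pow n)
  refine (hcont.intervalIntegrable_of_Icc hab).congr_uIoo fun x hx => ?_
  rw [uIoo_of_le hab] at hx
  simp only [derivWithin_of_mem_nhds (Ici_mem_nhds hx.1)]

end ContDiffOnIci

theorem integral_sq_mul_deriv_sq_mul_exp_le {h : ℝ → ℝ} {t₀ t α : ℝ} (ht : t₀ ≤ t)
    (hd : ∀ x ∈ Icc t₀ t, HasDerivAt h (deriv h x) x) (hd_cont : ContinuousOn (deriv h) (Icc t₀ t))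
    (hd_nonneg : ∀ x ∈ Icc t₀ t, 0 ≤ deriv h x)
    (hmono : MonotoneOn (fun s => s ^ 2 * deriv h s) (Icc t₀ t)) (hα : 0 < α) :
    α ^ 2 * ∫ s in t₀..t, s ^ 2 * deriv h s ^ 2 * exp (2 * α * h s) ≤
      α / 2 * t ^ 2 * deriv h t * exp (2 * α * h t) := by
  have hprim : ∀ x ∈ Icc t₀ t, HasDerivAt (fun s => exp (2 * α * h s) / (2 * α))
      (deriv h x * exp (2 * α * h x)) x := fun x hx =>
    (((hd x hx).const_mul (2 * α)).exp.div_const (2 * α)).congr_deriv (by field_simp)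
  have hE_cont : ContinuousOn (fun s => exp (2 * α * h s)) (Icc t₀ t) := fun x hx =>
    (((hd x hx).continuousAt.const_mul (2 * α)).rexp).continuousWithinAt
  have hstieltjes := integral_mul_deriv_le_of_monotoneOn ht hmono hprim (hd_cont.mul hE_cont)
    fun x hx => mul_nonneg (hd_nonneg x hx) (exp_pos _).le
  have hM : 0 ≤ t ^ 2 * deriv h t := mul_nonneg (sq_nonneg t) (hd_nonneg t ⟨ht, le_rfl⟩)
  have hE₀ : 0 ≤ α / 2 * (t ^ 2 * deriv h t) * exp (2 * α * h t₀) := by positivity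
  calc α ^ 2 * ∫ s in t₀..t, s ^ 2 * deriv h s ^ 2 * exp (2 * α * h s)
      = α ^ 2 * ∫ s in t₀..t, s ^ 2 * deriv h s * (deriv h s * exp (2 * α * h s)) := by
        congr 1
        exact integral_congr fun s _ => by ring
    _ ≤ α ^ 2 * (t ^ 2 * deriv h t *
        (exp (2 * α * h t) / (2 * α) - exp (2 * α * h t₀) / (2 * α))) := by gcongr
    _ = α / 2 * t ^ 2 * deriv h t * exp (2 * α * h t)
          - α / 2 * (t ^ 2 * deriv h t) * exp (2 * α * h t₀) := by
        field_simp
    _ ≤ α / 2 * t ^ 2 * deriv h t * exp (2 * α * h t) := sub_le_self _ hE₀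

/-- Stieltjes integration-by-parts estimate for
`K(t) = α² ∫₀ᵗ s² h'(s)² e^{2αh(s)} ds` when `t ↦ t²h'(t)` is nondecreasing on
`[t₀,∞)`. -/
theorem stmt10 (h : ℝ → ℝ) (t₀ α : ℝ)
    (hh : ContDiffOn ℝ 1 h (Ici 0))
    (hh' : ∀ t ∈ Ici (0:ℝ), 0 ≤ deriv h t)
    (ht₀ : 0 < t₀)
    (hmono : MonotoneOn (fun t => t ^ 2 * deriv h t) (Ici t₀))
    (hα : 0 < α)
    (K : ℝ → ℝ)
    (hK : ∀ t, K t = α ^ 2 * ∫ s in (0:ℝ)..t,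
        s ^ 2 * (deriv h s) ^ 2 * Real.exp (2 * α * h s)) :
    ∃ C : ℝ, ∀ t ≥ t₀,
      K t ≤ α / 2 * t ^ 2 * deriv h t * Real.exp (2 * α * h t) + C := by
  have hF_int : ∀ b, 0 ≤ b → IntervalIntegrable
      (fun s => s ^ 2 * deriv h s ^ 2 * exp (2 * α * h s)) volume 0 b := fun b hb => by
    have hE_cont : ContinuousOn (fun s => exp (2 * α * h s)) (Icc 0 b) :=
      ((hh.continuousOn.mono Icc_subset_Ici_self).const_smul (2 * α)).rexp
    convert hh.intervalIntegrable_mul_deriv_pow hb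
      (f := fun s => s ^ 2 * exp (2 * α * h s)) ((continuousOn_pow 2).mul hE_cont) 2
      using 2 with s
    ring
  refine ⟨K t₀, fun t ht => ?_⟩
  have ht₀t : Icc t₀ t ⊆ Ioi 0 := fun s hs => ht₀.trans_le hs.1
  have hK_sub :
      K t - K t₀ = α ^ 2 * ∫ s in t₀..t, s ^ 2 * deriv h s ^ 2 * exp (2 * α * h s) := by
    rw [hK, hK, ← mul_sub, integral_interval_sub_left (hF_int t (ht₀.le.trans ht))
      (hF_int t₀ ht₀.le)]
  have hbound := integral_sq_mul_deriv_sq_mul_exp_le ht (fun x hx => hh.hasDerivAt_of_Ici (ht₀t hx))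
    (hh.continuousOn_deriv_of_Ici.mono ht₀t) (fun x hx => hh' x (Ioi_subset_Ici_self (ht₀t hx)))
    (hmono.mono Icc_subset_Ici_self) hα
  linarith
end
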